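/- arXiv:2302.13461 — 7 statements merged into one kernel-verified Lean document; each statement's English description precedes it below -/
import Mathlib

section
/- Let m ≡ 1 (mod 12) with m ≥ 13, n = 2^m - 1, and v = 2^((m-1)/2) - 1. For every integer a with 1 ≤ a ≤ 2^((m-1)/2) + 2, the binary digit sum of (a·v mod n) is congruent to 0, 4, or 5 modulo 6. -/
/-! Write `m = 2k + 1`, so `6 ∣ k`, and `N = 2 ^ k`. Since `a * (N - 1) ≤ (N + 2)(N - 1) < 2N² - 1 = n`,
no reduction happens. For `1 ≤ a ≤ N` the binary digits of `a(N - 1) = (N - a) + N(a - 1)` are those of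
`a - 1` followed by their `k`-bit complement, so the digit sum is `k`; the two remaining values
`(N + 1)(N - 1) = N² - 1` and `(N + 2)(N - 1) = N² + (N - 2)` have digit sums `2k` and `k`.
Hence the digit sum is always `≡ 0 (mod 6)`. -/

namespace Nat

variable {b : ℕ}

theorem digits_sum_add_pow_mul (hb : 1 < b) {k r : ℕ} (hr : r < b ^ k) (a : ℕ) :
    (b.digits (r + b ^ k * a)).sum = (b.digits r).sum + (b.digits a).sum := by
  rcases Nat.eq_zero_or_pos a with rfl | ha
  · simp
  have hlen : (b.digits r).length ≤ k := (digits_length_le_iff hb r).2 hr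
  rw [← Nat.add_sub_cancel' hlen, ← digits_append_zeroes_append_digits hb ha]
  simp

theorem digits_sum_add_mul (hb : 1 < b) {c : ℕ} (hc : c < b) (a : ℕ) :
    (b.digits (c + b * a)).sum = c + (b.digits a).sum := by
  have h := digits_sum_add_pow_mul hb (k := 1) (by rwa [pow_one]) a
  rw [pow_one] at h
  rw [h]
  rcases Nat.eq_zero_or_pos c with rfl | hc0
  · simp
  · simp [digits_of_lt b c hc0.ne' hc]

theorem digits_sum_add_digits_sum_pow_sub_one_sub (hb : 1 < b) {k x : ℕ} (hx : x < b ^ k) :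
    (b.digits x).sum + (b.digits (b ^ k - 1 - x)).sum = k * (b - 1) := by
  induction k generalizing x with
  | zero => simp_all
  | succ k ih =>
    have hxb : x % b < b := Nat.mod_lt x (by omega)
    have hq : x / b < b ^ k := Nat.div_lt_of_lt_mul (by rwa [mul_comm, ← pow_succ])
    have hx : (b.digits x).sum = x % b + (b.digits (x / b)).sum := by
      conv_lhs => rw [← Nat.mod_add_div x b]
      exact digits_sum_add_mul hb hxb _
    have hcompl : (b.digits (b ^ (k + 1) - 1 - x)).sum =
        (b - 1 - x % b) + (b.digits (b ^ k - 1 - x / b)).sum := by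
      rw [← digits_sum_add_mul hb (by omega)]
      congr 2
      have := Nat.mod_add_div x b
      have : b * (x / b) + b ≤ b * b ^ k := by rw [← Nat.mul_succ]; exact Nat.mul_le_mul_left _ hq
      rw [pow_succ, Nat.mul_sub, Nat.mul_sub_one, mul_comm (b ^ k)]
      omega
    rw [hx, hcompl, add_mul, one_mul, ← ih hq]
    omega

theorem digits_sum_pow_sub_one (hb : 1 < b) (k : ℕ) :
    (b.digits (b ^ k - 1)).sum = k * (b - 1) := by
  simpa using digits_sum_add_digits_sum_pow_sub_one_sub hb (Nat.pow_pos (n := k) (by omega))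

theorem digits_sum_mul_pow_sub_one (hb : 1 < b) {k a : ℕ} (ha1 : 1 ≤ a) (ha : a ≤ b ^ k) :
    (b.digits (a * (b ^ k - 1))).sum = k * (b - 1) := by
  have hsplit : a * (b ^ k - 1) = (b ^ k - 1 - (a - 1)) + b ^ k * (a - 1) := by
    have h1 : 1 ≤ b ^ k := ha1.trans ha
    have h2 : a - 1 ≤ b ^ k - 1 := by omega
    zify [ha1, h1, h2]
    ring
  rw [hsplit, digits_sum_add_pow_mul hb (by omega), add_comm,
    digits_sum_add_digits_sum_pow_sub_one_sub hb (by omega)]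

theorem digits_sum_pow_add_one_mul_pow_sub_one (hb : 1 < b) (k : ℕ) :
    (b.digits ((b ^ k + 1) * (b ^ k - 1))).sum = 2 * k * (b - 1) := by
  rw [← Nat.sq_sub_sq, ← pow_mul, one_pow, digits_sum_pow_sub_one hb, mul_comm k]

theorem digits_sum_pow_add_two_mul_pow_sub_one (hb : 1 < b) (k : ℕ) :
    (b.digits ((b ^ k + 2) * (b ^ k - 1))).sum = k * (b - 1) := by
  rcases k.eq_zero_or_pos with rfl | hk
  · simp
  have h2 : 2 ≤ b ^ k := Nat.one_lt_pow hk.ne' hb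
  have hsplit : (b ^ k + 2) * (b ^ k - 1) = (b ^ k - 1 - 1) + b ^ (2 * k) * 1 := by
    have h1 : 1 ≤ b ^ k - 1 := by omega
    zify [h1, h2.trans' one_le_two]
    ring
  have hlt : b ^ k - 1 - 1 < b ^ (2 * k) :=
    (Nat.sub_le _ _).trans_lt <| (Nat.sub_lt (by omega) one_pos).trans_le <|
      Nat.pow_le_pow_right (by omega) (by omega)
  rw [hsplit, digits_sum_add_pow_mul hb hlt, add_comm,
    ← digits_sum_add_digits_sum_pow_sub_one_sub hb (x := 1) (by omega)]

theorem two_pow_add_two_mul_two_pow_sub_one_lt (k : ℕ) :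
    (2 ^ k + 2) * (2 ^ k - 1) < 2 ^ (2 * k + 1) - 1 := by
  have h1 : 1 ≤ 2 ^ k := k.one_le_two_pow
  have h2 : 1 ≤ 2 ^ (2 * k + 1) := Nat.one_le_two_pow
  zify [h1, h2]
  rw [pow_succ, pow_mul']
  nlinarith

end Nat

theorem digitSum_av_m1mod12_general (m : ℕ) (h : m % 12 = 1)
    (a : ℕ) (ha1 : 1 ≤ a) (ha2 : a ≤ 2 ^ ((m - 1) / 2) + 2) :
    (Nat.digits 2 (a * (2 ^ ((m - 1) / 2) - 1) % (2 ^ m - 1))).sum % 6 = 0 ∨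
    (Nat.digits 2 (a * (2 ^ ((m - 1) / 2) - 1) % (2 ^ m - 1))).sum % 6 = 4 ∨
    (Nat.digits 2 (a * (2 ^ ((m - 1) / 2) - 1) % (2 ^ m - 1))).sum % 6 = 5 := by
  set k := (m - 1) / 2
  have hm : m = 2 * k + 1 := by omega
  have hlt : a * (2 ^ k - 1) < 2 ^ m - 1 :=
    (Nat.mul_le_mul_right _ ha2).trans_lt (hm ▸ Nat.two_pow_add_two_mul_two_pow_sub_one_lt k)
  have hsum : (Nat.digits 2 (a * (2 ^ k - 1))).sum = k ∨
      (Nat.digits 2 (a * (2 ^ k - 1))).sum = 2 * k := by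
    rcases (by omega : a ≤ 2 ^ k ∨ a = 2 ^ k + 1 ∨ a = 2 ^ k + 2) with ha | rfl | rfl
    · exact .inl (by simpa using Nat.digits_sum_mul_pow_sub_one one_lt_two ha1 ha)
    · exact .inr (by simpa using Nat.digits_sum_pow_add_one_mul_pow_sub_one one_lt_two k)
    · exact .inl (by simpa using Nat.digits_sum_pow_add_two_mul_pow_sub_one one_lt_two k)
  rw [Nat.mod_eq_of_lt hlt]
  omega

theorem digitSum_av_m1mod12 (m : ℕ) (hm : 13 ≤ m) (h : m % 12 = 1)
    (a : ℕ) (ha1 : 1 ≤ a) (ha2 : a ≤ 2 ^ ((m - 1) / 2) + 2) :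
    (Nat.digits 2 (a * (2 ^ ((m - 1) / 2) - 1) % (2 ^ m - 1))).sum % 6 = 0 ∨
    (Nat.digits 2 (a * (2 ^ ((m - 1) / 2) - 1) % (2 ^ m - 1))).sum % 6 = 4 ∨
    (Nat.digits 2 (a * (2 ^ ((m - 1) / 2) - 1) % (2 ^ m - 1))).sum % 6 = 5 :=
  digitSum_av_m1mod12_general m h a ha1 ha2
end

section
/- Let m ≡ 1 (mod 12) with m ≥ 13, n = 2^m - 1, and v = 2^((m+1)/2) - 1. For every integer a with 1 ≤ a ≤ 2^((m-1)/2) + 2, the binary digit sum of (a·v mod n) is congruent to 1, 2, or 3 modulo 6. -/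
lemma s_rec (n : ℕ) : (Nat.digits 2 n).sum = n % 2 + (Nat.digits 2 (n/2)).sum := by
  rcases Nat.eq_zero_or_pos n with h | h
  · simp [h]
  · rw [Nat.digits_def' (by norm_num : 1 < 2) h, List.sum_cons]

lemma compl_sum (k : ℕ) : ∀ x < 2^k,
    (Nat.digits 2 x).sum + (Nat.digits 2 (2^k - 1 - x)).sum = k := by
  induction k with
  | zero => intro x hx; interval_cases x; simp
  | succ k ih =>
    intro x hx
    have h2 : 2^(k+1) = 2*2^k := by ring
    have hp : 1 ≤ 2^k := Nat.one_le_two_pow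
    have hx2 : x / 2 < 2^k := by omega
    have hI := ih (x/2) hx2
    rw [s_rec x, s_rec (2^(k+1)-1-x)]
    have hq : (2^(k+1)-1-x)/2 = 2^k - 1 - x/2 := by omega
    have hr : x % 2 + (2^(k+1)-1-x) % 2 = 1 := by omega
    rw [hq]; omega

lemma sum_split (k : ℕ) : ∀ b < 2^k, ∀ c,
    (Nat.digits 2 (b + 2^k * c)).sum = (Nat.digits 2 b).sum + (Nat.digits 2 c).sum := by
  induction k with
  | zero => intro b hb c; interval_cases b; simp
  | succ k ih =>
    intro b hb c
    have h2 : 2^(k+1) = 2*2^k := by ring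
    have hN : 2^(k+1) * c = 2 * (2^k * c) := by rw [h2]; ring
    rw [s_rec (b + 2^(k+1)*c), s_rec b]
    have e1 : (b + 2^(k+1)*c) % 2 = b % 2 := by
      rw [hN]; omega
    have e2 : (b + 2^(k+1)*c) / 2 = b/2 + 2^k * c := by
      rw [hN]; omega
    rw [e1, e2, ih (b/2) (by omega) c]
    omega

theorem digitSum_av_m1mod12' (m : ℕ) (hm : 13 ≤ m) (h : m % 12 = 1)
    (a : ℕ) (ha1 : 1 ≤ a) (ha2 : a ≤ 2 ^ ((m - 1) / 2) + 2) :
    (Nat.digits 2 (a * (2 ^ ((m + 1) / 2) - 1) % (2 ^ m - 1))).sum % 6 = 1 ∨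
    (Nat.digits 2 (a * (2 ^ ((m + 1) / 2) - 1) % (2 ^ m - 1))).sum % 6 = 2 ∨
    (Nat.digits 2 (a * (2 ^ ((m + 1) / 2) - 1) % (2 ^ m - 1))).sum % 6 = 3 := by
  left
  obtain ⟨t, ht, ht1⟩ : ∃ t, m = 12*t+1 ∧ 1 ≤ t := ⟨m/12, by omega⟩
  subst ht
  have e1 : (12*t+1+1)/2 = 6*t+1 := by omega
  have e2 : (12*t+1-1)/2 = 6*t := by omega
  rw [e1]
  rw [e2] at ha2
  set P := 2^(6*t) with hPdef
  have hP64 : 64 ≤ P := by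
    calc (64:ℕ) = 2^6 := by norm_num
    _ ≤ 2^(6*t) := Nat.pow_le_pow_right (by norm_num) (by omega)
  have hv : 2^(6*t+1) = 2*P := by rw [pow_succ]; ring
  have hn : 2^(12*t+1) = 2*P*P := by
    rw [show 12*t+1 = 6*t+(6*t+1) by ring, pow_add, hv]; ring
  rw [hv, hn]
  clear_value P
  have s0 : (Nat.digits 2 0).sum = 0 := by simp
  have s1 : (Nat.digits 2 1).sum = 1 := by rw [s_rec]; simp
  have s2 : (Nat.digits 2 2).sum = 1 := by rw [s_rec, s1]
  rcases (by omega : a ≤ P ∨ a = P + 1 ∨ a = P + 2) with hc | hc | hc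
  · -- a ≤ P
    have key : a * (2*P - 1) = (2*P - a) + 2^(6*t+1) * (a-1) := by
      rw [hv]
      zify [ha1, (by omega : 1 ≤ 2*P), (by omega : a ≤ 2*P)]
      ring
    have hlt : a * (2*P - 1) < 2*P*P - 1 := by
      have h1 : a * (2*P-1) ≤ P * (2*P-1) := Nat.mul_le_mul_right _ hc
      have h2 : P * (2*P-1) < 2*P*P - 1 := by
        zify [(by omega : 1 ≤ 2*P), (by nlinarith : 1 ≤ 2*P*P)]
        nlinarith
      omega
    rw [Nat.mod_eq_of_lt hlt, key,
      sum_split (6*t+1) (2*P - a) (by omega) (a-1)]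
    have hcs := compl_sum (6*t+1) (a-1) (by omega)
    have : 2^(6*t+1) - 1 - (a-1) = 2*P - a := by omega
    rw [this] at hcs
    omega
  · -- a = P + 1
    subst hc
    have key : (P+1) * (2*P - 1) = (2*P*P - 1) + P := by
      zify [(by omega : 1 ≤ 2*P), (by nlinarith : 1 ≤ 2*P*P)]
      ring
    have h1 : P + 1 < 2*P*P := by nlinarith
    have hlt : P < 2*P*P - 1 := by omega
    rw [key, Nat.add_mod_left, Nat.mod_eq_of_lt hlt]
    have hs := sum_split (6*t) 0 Nat.one_le_two_pow 1
    rw [s0, s1] at hs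
    simp only [Nat.zero_add, Nat.mul_one] at hs
    rw [hPdef, hs]
  · -- a = P + 2
    subst hc
    have key : (P+2) * (2*P - 1) = (2*P*P - 1) + (3*P - 1) := by
      zify [(by omega : 1 ≤ 2*P), (by nlinarith : 1 ≤ 2*P*P), (by omega : 1 ≤ 3*P)]
      ring
    have h1 : 3*P < 2*P*P := by nlinarith
    have hlt : 3*P - 1 < 2*P*P - 1 := by omega
    rw [key, Nat.add_mod_left, Nat.mod_eq_of_lt hlt]
    have h3 : 3*P - 1 = (P - 1) + 2^(6*t) * 2 := by omega
    rw [h3, sum_split (6*t) (P-1) (by omega) 2, s2]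
    have hcs := compl_sum (6*t) 0 (by omega)
    rw [s0] at hcs
    have : 2^(6*t) - 1 - 0 = P - 1 := by omega
    rw [this] at hcs
    omega
end

section
/- Let m ≡ 1 (mod 12) with m ≥ 13, v = 2^((m+1)/2) - 1, and let ā be an odd integer with 1 ≤ ā ≤ 2^((m-1)/2) - 1. Then the binary digit sum of ā·v equals (m+1)/2. -/
private lemma sumdig (z : ℕ) :
    (Nat.digits 2 z).sum = z % 2 + (Nat.digits 2 (z / 2)).sum := by
  rcases Nat.eq_zero_or_pos z with h | h
  · simp [h]
  · rw [Nat.digits_def' (by norm_num) h]; simp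

private lemma lemA (n : ℕ) : ∀ x y : ℕ, x < 2 ^ n →
    (Nat.digits 2 (x + 2 ^ n * y)).sum
      = (Nat.digits 2 x).sum + (Nat.digits 2 y).sum := by
  induction n with
  | zero => intro x y hx; interval_cases x; simp
  | succ n ih =>
    intro x y hx
    have hp : 2 ^ (n + 1) = 2 * 2 ^ n := by ring
    have hxy : x + 2 ^ (n + 1) * y = x + 2 * (2 ^ n * y) := by rw [hp]; ring
    rw [sumdig (x + 2 ^ (n + 1) * y), sumdig x, hxy]
    have h1 : (x + 2 * (2 ^ n * y)) % 2 = x % 2 := by omega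
    have h2 : (x + 2 * (2 ^ n * y)) / 2 = x / 2 + 2 ^ n * y := by omega
    rw [h1, h2, ih (x / 2) y (by omega)]
    omega

private lemma lemB (n : ℕ) : ∀ b : ℕ, b < 2 ^ n →
    (Nat.digits 2 (2 ^ n - 1 - b)).sum + (Nat.digits 2 b).sum = n := by
  induction n with
  | zero => intro b hb; interval_cases b; simp
  | succ n ih =>
    intro b hb
    have hp : 2 ^ (n + 1) = 2 * 2 ^ n := by ring
    have hpos : 1 ≤ 2 ^ n := Nat.one_le_two_pow
    rw [sumdig (2 ^ (n + 1) - 1 - b), sumdig b]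
    have h1 : (2 ^ (n + 1) - 1 - b) % 2 = 1 - b % 2 := by omega
    have h2 : (2 ^ (n + 1) - 1 - b) / 2 = 2 ^ n - 1 - b / 2 := by omega
    have h3 := ih (b / 2) (by omega)
    rw [h1, h2]
    omega

theorem digitSum_oddMul_v' (m : ℕ) (hm : 13 ≤ m) (h : m % 12 = 1)
    (a : ℕ) (hodd : Odd a) (ha1 : 1 ≤ a) (ha2 : a ≤ 2 ^ ((m - 1) / 2) - 1) :
    (Nat.digits 2 (a * (2 ^ ((m + 1) / 2) - 1))).sum = (m + 1) / 2 := by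
  set n := (m + 1) / 2 with hn
  have hpos : 1 ≤ 2 ^ n := Nat.one_le_two_pow
  have hle : 2 ^ ((m - 1) / 2) ≤ 2 ^ n :=
    Nat.pow_le_pow_right (by norm_num) (by omega)
  have hple : 1 ≤ 2 ^ ((m - 1) / 2) := Nat.one_le_two_pow
  have haP : a ≤ 2 ^ n := by omega
  have key : a * (2 ^ n - 1) = (2 ^ n - 1 - (a - 1)) + 2 ^ n * (a - 1) := by
    zify [hpos, ha1, show a - 1 ≤ 2 ^ n - 1 from by omega]
    push_cast [ha1]
    ring
  rw [key, lemA n _ (a - 1) (by omega), lemB n (a - 1) (by omega)]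
end

section
/- Let m ≡ 7 (mod 12) with m ≥ 7, n = 2^m - 1, and v = 2^((m-1)/2) - 1. Then gcd(v, n) = 1, and for every integer a with 1 ≤ a ≤ 2^((m-1)/2), the binary digit sum of (a·v mod n) is congruent to 1, 2, or 3 modulo 6. -/
/-- Splitting a number at bit position k: digit sums add. -/
lemma sum_digits_split (k q r : ℕ) (hr : r < 2 ^ k) :
    (Nat.digits 2 (r + 2 ^ k * q)).sum = (Nat.digits 2 r).sum + (Nat.digits 2 q).sum := by
  rcases Nat.eq_zero_or_pos q with rfl | hq
  · simp
  have hlen : (Nat.digits 2 r).length ≤ k := by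
    rcases Nat.eq_zero_or_pos r with rfl | hr0
    · simp
    rw [Nat.digits_len 2 r (by norm_num) (by omega)]
    have := Nat.log_lt_of_lt_pow (y := r) (by omega) hr
    omega
  have key := Nat.digits_append_zeroes_append_digits (b := 2) (k := k - (Nat.digits 2 r).length)
    (m := q) (n := r) (by norm_num) hq
  rw [show (Nat.digits 2 r).length + (k - (Nat.digits 2 r).length) = k from by omega] at key
  rw [← key]
  simp [List.sum_append, List.sum_replicate]

/-- Complement: digit sums of b and 2^k - 1 - b add up to k. -/
lemma sum_digits_compl : ∀ k b : ℕ, b < 2 ^ k →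
    (Nat.digits 2 b).sum + (Nat.digits 2 (2 ^ k - 1 - b)).sum = k := by
  intro k
  induction k with
  | zero => intro b hb; interval_cases b; simp
  | succ k ih =>
    intro b hb
    have h2 : b % 2 < 2 := Nat.mod_lt _ (by norm_num)
    have hb2 : b / 2 < 2 ^ k := by
      have : 2 ^ (k + 1) = 2 * 2 ^ k := by ring
      omega
    have e1 : b = b % 2 + 2 ^ 1 * (b / 2) := by omega
    have e2 : 2 ^ (k + 1) - 1 - (b % 2 + 2 ^ 1 * (b / 2)) = (1 - b % 2) + 2 ^ 1 * (2 ^ k - 1 - b / 2) := by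
      have : 2 ^ (k + 1) = 2 * 2 ^ k := by ring
      have h2k : 1 ≤ 2 ^ k := Nat.one_le_two_pow
      omega
    rw [e1]
    rw [e2, sum_digits_split 1 _ _ (by omega), sum_digits_split 1 _ _ (by omega)]
    have hih := ih (b / 2) hb2
    have : (Nat.digits 2 (b % 2)).sum + (Nat.digits 2 (1 - b % 2)).sum = 1 := by
      interval_cases h : b % 2 <;> simp
    omega

theorem m7mod12_defSet' (m : ℕ) (hm : 7 ≤ m) (h : m % 12 = 7) :
    Nat.gcd (2 ^ ((m - 1) / 2) - 1) (2 ^ m - 1) = 1 ∧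
    ∀ a : ℕ, 1 ≤ a → a ≤ 2 ^ ((m - 1) / 2) →
      (Nat.digits 2 (a * (2 ^ ((m - 1) / 2) - 1) % (2 ^ m - 1))).sum % 6 = 1 ∨
      (Nat.digits 2 (a * (2 ^ ((m - 1) / 2) - 1) % (2 ^ m - 1))).sum % 6 = 2 ∨
      (Nat.digits 2 (a * (2 ^ ((m - 1) / 2) - 1) % (2 ^ m - 1))).sum % 6 = 3 := by
  set k := (m - 1) / 2 with hk
  have hmk : m = 2 * k + 1 := by omega
  have hk6 : k % 6 = 3 := by omega
  have hpk : 1 ≤ 2 ^ k := Nat.one_le_two_pow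
  have hpm : 2 ^ m = 2 * (2 ^ k * 2 ^ k) := by
    rw [hmk]; ring
  constructor
  · -- gcd part
    set d := Nat.gcd (2 ^ k - 1) (2 ^ m - 1) with hd
    have h1 : d ∣ 2 ^ k - 1 := Nat.gcd_dvd_left _ _
    have h2 : d ∣ 2 ^ m - 1 := Nat.gcd_dvd_right _ _
    have h3 : d ∣ 2 ^ m - 2 := by
      have : 2 ^ m - 2 = (2 ^ k - 1) * (2 * (2 ^ k + 1)) := by
        have : (2 ^ k - 1) * (2 * (2 ^ k + 1)) = 2 * (2 ^ k * 2 ^ k) - 2 := by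
          cases' Nat.exists_eq_add_of_le hpk with c hc
          rw [hc]
          have e1 : 1 + c - 1 = c := by omega
          rw [e1]
          ring_nf
          omega
        rw [this, hpm]
      rw [this]
      exact Dvd.dvd.mul_right h1 _
    have h4 : d ∣ 1 := by
      have := Nat.dvd_sub h2 h3
      have e : 2 ^ m - 1 - (2 ^ m - 2) = 1 := by
        have : 4 ≤ 2 ^ m := by
          calc 4 = 2 ^ 2 := by norm_num
          _ ≤ 2 ^ m := Nat.pow_le_pow_right (by norm_num) (by omega)
        omega
      rwa [e] at this
    exact Nat.dvd_one.mp h4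
  · intro a ha1 ha2
    right; right
    have hlt : a * (2 ^ k - 1) < 2 ^ m - 1 := by
      have : a * (2 ^ k - 1) ≤ 2 ^ k * (2 ^ k - 1) := Nat.mul_le_mul_right _ ha2
      have h2 : 2 ^ k * (2 ^ k - 1) + 2 ^ k = 2 ^ k * 2 ^ k := by
        obtain ⟨c, hc⟩ : ∃ c, 2 ^ k = c + 1 := ⟨2 ^ k - 1, by omega⟩
        rw [hc]
        simp only [Nat.add_sub_cancel]
        ring
      have h3 : 2 ^ k ≤ 2 ^ k * 2 ^ k := Nat.le_mul_of_pos_left _ (by omega)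
      omega
    rw [Nat.mod_eq_of_lt hlt]
    have split : a * (2 ^ k - 1) = (2 ^ k - a) + 2 ^ k * (a - 1) := by
      cases' Nat.exists_eq_add_of_le ha1 with b hb
      cases' Nat.exists_eq_add_of_le ha2 with c hc
      subst hb
      rw [hc]
      have e1 : 1 + b + c - 1 = b + c := by omega
      have e2 : 1 + b + c - (1 + b) = c := by omega
      have e3 : 1 + b - 1 = b := by omega
      rw [e1, e2, e3]
      ring
    rw [split, sum_digits_split k (a - 1) (2 ^ k - a) (by omega)]
    have hcompl := sum_digits_compl k (a - 1) (by omega)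
    have e : 2 ^ k - 1 - (a - 1) = 2 ^ k - a := by omega
    rw [e] at hcompl
    omega
end

section
/- Let m ≡ 3 (mod 12) with m ≥ 3, n = 2^m - 1, and v = 2^((m-1)/2) - 1. Then gcd(v, n) = 1, and for every integer a with 1 ≤ a ≤ 2^((m-1)/2), the binary digit sum of (a·v mod n) is congruent to 0, 1, or 5 modulo 6. -/
/-!
Write `m = 2k + 1`, so `k ≡ 1 (mod 6)` and `gcd(2^k - 1, 2^m - 1) = 2^gcd(k, m) - 1 = 1`.
For `1 ≤ a ≤ 2^k` the product `a(2^k - 1) < 2^m - 1` needs no reduction, and it equals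
`(2^k - a) + 2^k (a - 1)`: its low `k` bits are those of `2^k - 1 - (a - 1)`, the bitwise complement
of `a - 1`, and its high bits are those of `a - 1`. Hence its digit sum is exactly `k`.
-/

namespace Nat

variable {b : ℕ}

theorem digits_sum_add_base_mul (hb : 1 < b) {r : ℕ} (hr : r < b) (y : ℕ) :
    (b.digits (r + b * y)).sum = r + (b.digits y).sum := by
  by_cases h : r = 0 ∧ y = 0
  · simp [h]
  · rw [digits_add b hb r y hr (by tauto), List.sum_cons]

theorem digits_sum_add_base_pow_mul (hb : 1 < b) {k x : ℕ} (hx : x < b ^ k) (y : ℕ) :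
    (b.digits (x + b ^ k * y)).sum = (b.digits x).sum + (b.digits y).sum := by
  rcases Nat.eq_zero_or_pos y with rfl | hy
  · simp
  have hlen : (b.digits x).length ≤ k := (digits_length_le_iff hb x).mpr hx
  rw [← Nat.add_sub_cancel' hlen, ← digits_append_zeroes_append_digits hb hy]
  simp

theorem digits_sum_add_digits_sum_complement (hb : 1 < b) :
    ∀ {k x : ℕ}, x < b ^ k → (b.digits x).sum + (b.digits (b ^ k - 1 - x)).sum = k * (b - 1)
  | 0, x, hx => by simp_all
  | k + 1, x, hx => by
    obtain ⟨r, q, hr, rfl⟩ : ∃ r q, r < b ∧ x = r + b * q :=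
      ⟨x % b, x / b, Nat.mod_lt x (by omega), (Nat.mod_add_div x b).symm⟩
    obtain ⟨s, hs⟩ := Nat.exists_eq_add_of_lt hr
    have hq : q < b ^ k := by
      by_contra! h
      rw [pow_succ'] at hx
      nlinarith
    obtain ⟨c, hc⟩ := Nat.exists_eq_add_of_lt hq
    have hcompl : b ^ (k + 1) - 1 - (r + b * q) = s + b * c := by
      rw [Nat.sub_sub, pow_succ', hc]
      apply Nat.sub_eq_of_eq_add
      rw [hs]
      ring
    have ih := digits_sum_add_digits_sum_complement hb (k := k) hq
    rw [hc, show q + c + 1 - 1 - q = c by omega] at ih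
    rw [hcompl, digits_sum_add_base_mul hb hr, digits_sum_add_base_mul hb (by omega)]
    rw [show b - 1 = r + s by omega] at ih ⊢
    linarith

theorem digits_sum_mul_base_pow_sub_one (hb : 1 < b) {k a : ℕ} (ha : 1 ≤ a) (hak : a ≤ b ^ k) :
    (b.digits (a * (b ^ k - 1))).sum = k * (b - 1) := by
  obtain ⟨c, rfl⟩ := Nat.exists_eq_add_of_le' ha
  obtain ⟨e, he⟩ := Nat.exists_eq_add_of_le hak
  have hsplit : (c + 1) * (b ^ k - 1) = (b ^ k - 1 - c) + b ^ k * c := by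
    rw [he, show c + 1 + e - 1 - c = e by omega, show c + 1 + e - 1 = c + e by omega]
    ring
  rw [hsplit, digits_sum_add_base_pow_mul hb (by omega), add_comm,
    digits_sum_add_digits_sum_complement hb (by omega)]

end Nat

theorem m3mod12_defSet_general (m : ℕ) (h : m % 12 = 3) :
    Nat.gcd (2 ^ ((m - 1) / 2) - 1) (2 ^ m - 1) = 1 ∧
    ∀ a : ℕ, 1 ≤ a → a ≤ 2 ^ ((m - 1) / 2) →
      (Nat.digits 2 (a * (2 ^ ((m - 1) / 2) - 1) % (2 ^ m - 1))).sum % 6 = 0 ∨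
      (Nat.digits 2 (a * (2 ^ ((m - 1) / 2) - 1) % (2 ^ m - 1))).sum % 6 = 1 ∨
      (Nat.digits 2 (a * (2 ^ ((m - 1) / 2) - 1) % (2 ^ m - 1))).sum % 6 = 5 := by
  set k := (m - 1) / 2
  have hm : m = 2 * k + 1 := by omega
  refine ⟨?_, fun a ha hak => ?_⟩
  · have hcop : Nat.gcd k m = 1 := by rw [hm]; simp
    rw [Nat.pow_sub_one_gcd_pow_sub_one, hcop, pow_one]
  · have hlt : a * (2 ^ k - 1) < 2 ^ m - 1 := by
      have h1 : a * (2 ^ k - 1) ≤ 2 ^ k * (2 ^ k - 1) := Nat.mul_le_mul_right _ hak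
      have h2 : 2 ^ m = 2 * 2 ^ k * 2 ^ k := by rw [hm]; ring
      zify [Nat.one_le_two_pow (n := k), Nat.one_le_two_pow (n := m)] at h1 h2 ⊢
      nlinarith
    rw [Nat.mod_eq_of_lt hlt, Nat.digits_sum_mul_base_pow_sub_one one_lt_two ha hak]
    omega

theorem m3mod12_defSet (m : ℕ) (hm : 3 ≤ m) (h : m % 12 = 3) :
    Nat.gcd (2 ^ ((m - 1) / 2) - 1) (2 ^ m - 1) = 1 ∧
    ∀ a : ℕ, 1 ≤ a → a ≤ 2 ^ ((m - 1) / 2) →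
      (Nat.digits 2 (a * (2 ^ ((m - 1) / 2) - 1) % (2 ^ m - 1))).sum % 6 = 0 ∨
      (Nat.digits 2 (a * (2 ^ ((m - 1) / 2) - 1) % (2 ^ m - 1))).sum % 6 = 1 ∨
      (Nat.digits 2 (a * (2 ^ ((m - 1) / 2) - 1) % (2 ^ m - 1))).sum % 6 = 5 :=
  m3mod12_defSet_general m h
end

section
/- Let n be odd and let C₁ and C₂ be a pair of odd-like binary duadic codes of length n given by a splitting (S₁, S₂, μ), with common minimum odd weight d₀. Then d₀² ≥ n. -/
/-- The binary cyclic code of length `n` consisting of all words whose associated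
polynomial vanishes at `β ^ j` for every `j` in the defining set `T`. -/
def cyclicCode (n : ℕ) (K : Type*) [Field K] [Algebra (ZMod 2) K] (β : K)
    (T : Finset ℕ) : Set (Fin n → ZMod 2) :=
  {c | ∀ j ∈ T, ∑ i : Fin n, algebraMap (ZMod 2) K (c i) * β ^ (i.val * j) = 0}

/-- The Hamming weight of a binary word. -/
def wt {n : ℕ} (c : Fin n → ZMod 2) : ℕ :=
  (Finset.univ.filter fun i => c i ≠ 0).card

/-!
If `a ∈ C₁` has odd weight, its image `b` under the multiplier `i ↦ μ i` lies in `C₂` and has the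
same weight. The cyclic product `a b` (the product of the word polynomials modulo `X ^ n - 1`)
vanishes at every `β ^ j` with `j ≠ 0`, because `S₁ ∪ S₂` contains all such `j`, and takes the
value `1` at `1`, because both weights are odd. Since `n = 1` in characteristic `2`, Fourier
inversion makes `a b` the all-ones word, and each of its `n` coefficients needs a pair from
`supp a × supp b`, so `n ≤ wt a * wt b = d₀ ^ 2`.
-/

open Finset

section CyclicWords

variable {n : ℕ} {R K : Type*} [CommRing R] [CommRing K] [Algebra R K]

noncomputable def wordEval (c : Fin n → R) (ζ : K) : K :=
  ∑ i, algebraMap R K (c i) * ζ ^ (i : ℕ)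

def cyclicConv (a b : Fin n → R) : Fin n → R :=
  fun k => ∑ i, a i * b (k - i)

lemma pow_val_add {ζ : K} (hζ : ζ ^ n = 1) (i m : Fin n) :
    ζ ^ ((i + m : Fin n) : ℕ) = ζ ^ (i : ℕ) * ζ ^ (m : ℕ) := by
  rw [Fin.val_add, ← pow_eq_pow_mod _ hζ, pow_add]

lemma wordEval_cyclicConv [NeZero n] {ζ : K} (hζ : ζ ^ n = 1) (a b : Fin n → R) :
    wordEval (cyclicConv a b) ζ = wordEval a ζ * wordEval b ζ := by
  unfold wordEval
  rw [sum_mul_sum]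
  simp only [cyclicConv, map_sum, sum_mul]
  rw [Finset.sum_comm]
  refine sum_congr rfl fun i _ => ?_
  rw [← Equiv.sum_comp (Equiv.addLeft i)]
  refine sum_congr rfl fun m _ => ?_
  simp only [Equiv.coe_addLeft, add_sub_cancel_left, pow_val_add hζ, map_mul]
  ring

lemma sum_pow_primitiveRoot [NeZero n] [IsDomain K] {β : K} (hβ : IsPrimitiveRoot β n)
    (t : Fin n) :
    ∑ j : Fin n, (β ^ (t : ℕ)) ^ (j : ℕ) = if t = 0 then (n : K) else 0 := by
  rw [Fin.sum_univ_eq_sum_range (fun j => (β ^ (t : ℕ)) ^ j)]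
  split_ifs with ht
  · simp [ht]
  · have hne : β ^ (t : ℕ) ≠ 1 :=
      hβ.pow_ne_one_of_pos_of_lt (Fin.val_ne_zero_iff.2 ht) t.isLt
    have hpow : (β ^ (t : ℕ)) ^ n = 1 := by rw [pow_right_comm, hβ.pow_eq_one, one_pow]
    have hgeom := geom_sum_mul (β ^ (t : ℕ)) n
    rw [hpow, sub_self] at hgeom
    exact (mul_eq_zero.1 hgeom).resolve_right (sub_ne_zero.2 hne)

/-- Fourier inversion: `β ^ (n - m)` stands for `β⁻¹ ^ m`. -/
lemma sum_wordEval_mul_pow [NeZero n] [IsDomain K] {β : K} (hβ : IsPrimitiveRoot β n)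
    (v : Fin n → R) (m : Fin n) :
    ∑ j : Fin n, wordEval v (β ^ (j : ℕ)) * (β ^ (n - m : ℕ)) ^ (j : ℕ) =
      n * algebraMap R K (v m) := by
  have key : ∀ k : Fin n, ∑ j : Fin n, (β ^ (j : ℕ)) ^ (k : ℕ) * (β ^ (n - m : ℕ)) ^ (j : ℕ) =
      if k - m = 0 then (n : K) else 0 := by
    intro k
    rw [← sum_pow_primitiveRoot hβ (k - m)]
    refine sum_congr rfl fun j _ => ?_
    rw [Fin.val_sub, ← pow_eq_pow_mod _ hβ.pow_eq_one, pow_right_comm, ← mul_pow, ← pow_add,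
      add_comm]
  simp only [wordEval, sum_mul, mul_assoc]
  rw [Finset.sum_comm]
  simp only [← mul_sum, key, sub_eq_zero, mul_ite, mul_zero, sum_ite_eq', mem_univ, if_true]
  ring

lemma natCast_mul_algebraMap_eq_wordEval_one [NeZero n] [IsDomain K] {β : K}
    (hβ : IsPrimitiveRoot β n) {v : Fin n → R}
    (hv : ∀ j : Fin n, j ≠ 0 → wordEval v (β ^ (j : ℕ)) = 0) (m : Fin n) :
    n * algebraMap R K (v m) = wordEval v (1 : K) := by
  rw [← sum_wordEval_mul_pow hβ v m,
    sum_eq_single 0 (fun j _ hj => by rw [hv j hj, zero_mul]) (by simp)]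
  simp

noncomputable def multiplier [NeZero n] {μ : ℕ} (hμ : μ.Coprime n) : Equiv.Perm (Fin n) :=
  Equiv.ofBijective (fun i => ⟨μ * i % n, Nat.mod_lt _ (NeZero.pos n)⟩) <|
    Finite.injective_iff_bijective.1 fun i i' h =>
      Fin.ext <| (Nat.ModEq.cancel_left_of_coprime hμ.symm (Fin.mk.inj h)).eq_of_lt_of_lt
        i.isLt i'.isLt

lemma wordEval_comp_multiplier_symm [NeZero n] {μ : ℕ} (hμ : μ.Coprime n) {ζ : K}
    (hζ : ζ ^ n = 1) (a : Fin n → R) :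
    wordEval (a ∘ (multiplier hμ).symm) ζ = wordEval a (ζ ^ μ) := by
  unfold wordEval
  rw [← Equiv.sum_comp (multiplier hμ)]
  refine sum_congr rfl fun i _ => ?_
  simp only [Function.comp_apply, Equiv.symm_apply_apply]
  rw [show ((multiplier hμ i : Fin n) : ℕ) = μ * i % n from rfl, ← pow_eq_pow_mod _ hζ, pow_mul]

end CyclicWords

section BinaryWords

variable {n : ℕ}

lemma sum_eq_wt (c : Fin n → ZMod 2) : ∑ i, c i = wt c := by
  rw [wt, ← sum_filter_ne_zero, ← nsmul_one, ← sum_const]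
  exact sum_congr rfl fun i hi => Fin.eq_one_of_ne_zero (c i) (mem_filter.1 hi).2

lemma wordEval_one {K : Type*} [CommRing K] [Algebra (ZMod 2) K] (c : Fin n → ZMod 2) :
    wordEval c (1 : K) = algebraMap (ZMod 2) K (wt c) := by
  simp only [wordEval, one_pow, mul_one, ← map_sum, sum_eq_wt]

lemma wt_comp_equiv (c : Fin n → ZMod 2) (e : Fin n ≃ Fin n) : wt (c ∘ e) = wt c :=
  card_equiv e fun i => by simp

lemma mem_cyclicCode_iff {K : Type*} [Field K] [Algebra (ZMod 2) K] {β : K} {T : Finset ℕ}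
    {c : Fin n → ZMod 2} : c ∈ cyclicCode n K β T ↔ ∀ j ∈ T, wordEval c (β ^ j) = 0 := by
  refine forall₂_congr fun j _ => ?_
  simp only [wordEval, ← pow_mul, mul_comm j]

lemma le_wt_mul_wt_of_cyclicConv_ne_zero [NeZero n] {a b : Fin n → ZMod 2}
    (h : ∀ k, cyclicConv a b k ≠ 0) : n ≤ wt a * wt b := by
  have hterm : ∀ k, ∃ i, a i ≠ 0 ∧ b (k - i) ≠ 0 := fun k =>
    let ⟨i, _, hi⟩ := exists_ne_zero_of_sum_ne_zero (h k)
    ⟨i, mul_ne_zero_iff.1 hi⟩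
  choose f hfa hfb using hterm
  simpa [wt] using card_le_card_of_injOn (s := univ)
    (t := univ.filter (a · ≠ 0) ×ˢ univ.filter (b · ≠ 0)) (fun k => (f k, k - f k))
    (fun k _ => by simp [hfa k, hfb k])
    (fun k _ k' _ hk => by
      obtain ⟨h₁, h₂⟩ := Prod.mk.inj hk
      rw [← sub_add_cancel k (f k), h₂, h₁, sub_add_cancel])

end BinaryWords

theorem square_root_bound_general (n : ℕ) (hn : Odd n)
    (K : Type*) [Field K] [Algebra (ZMod 2) K] (β : K) (hβ : IsPrimitiveRoot β n)
    (S₁ S₂ : Finset ℕ) (μ : ℕ) (hμ : Nat.Coprime μ n)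
    (hunion : ∀ j : ℕ, 1 ≤ j → j ≤ n - 1 → j ∈ S₁ ∨ j ∈ S₂)
    (hμ₂ : S₂.image (fun j => μ * j % n) = S₁)
    (d₀ : ℕ)
    (hex₁ : ∃ c ∈ cyclicCode n K β S₁, Odd (wt c) ∧ wt c = d₀) :
    n ≤ d₀ ^ 2 := by
  have : NeZero n := ⟨hn.pos.ne'⟩
  obtain ⟨a, ha, ha_odd, rfl⟩ := hex₁
  rw [mem_cyclicCode_iff] at ha
  have hroot : ∀ j, (β ^ j) ^ n = 1 := fun j => by rw [pow_right_comm, hβ.pow_eq_one, one_pow]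
  set b := a ∘ (multiplier hμ).symm
  have hb : ∀ j ∈ S₂, wordEval b (β ^ j) = 0 := fun j hj => by
    rw [wordEval_comp_multiplier_symm hμ (hroot j),
      ← pow_mul, pow_eq_pow_mod _ hβ.pow_eq_one, mul_comm]
    exact ha _ (hμ₂ ▸ mem_image_of_mem _ hj)
  have hab : ∀ j : Fin n, j ≠ 0 → wordEval (cyclicConv a b) (β ^ (j : ℕ)) = 0 := fun j hj => by
    rw [wordEval_cyclicConv (hroot j)]
    rcases hunion j (Nat.one_le_iff_ne_zero.2 (Fin.val_ne_zero_iff.2 hj)) (by omega) with h | h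
    · rw [ha j h, zero_mul]
    · rw [hb j h, mul_zero]
  have hwt : (wt a : ZMod 2) = 1 := ZMod.natCast_eq_one_iff_odd.2 ha_odd
  have hnK : (n : K) = 1 := by
    rw [← map_natCast (algebraMap (ZMod 2) K), ZMod.natCast_eq_one_iff_odd.2 hn, map_one]
  have hab_one : ∀ k, cyclicConv a b k = 1 := fun k => (algebraMap (ZMod 2) K).injective <| by
    rw [← one_mul (algebraMap _ _ _), ← hnK, natCast_mul_algebraMap_eq_wordEval_one hβ hab,
      wordEval_cyclicConv (one_pow n), wordEval_one, wordEval_one, wt_comp_equiv, hwt, map_one,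
      mul_one]
  calc n ≤ wt a * wt b := le_wt_mul_wt_of_cyclicConv_ne_zero fun k => by simp [hab_one k]
    _ = wt a ^ 2 := by rw [wt_comp_equiv, sq]

theorem square_root_bound (n : ℕ) (hn : Odd n) (hn1 : 1 < n)
    (K : Type*) [Field K] [Algebra (ZMod 2) K] (β : K) (hβ : IsPrimitiveRoot β n)
    (S₁ S₂ : Finset ℕ) (μ : ℕ) (hμ : Nat.Coprime μ n)
    (hsub₁ : ∀ j ∈ S₁, 1 ≤ j ∧ j ≤ n - 1) (hsub₂ : ∀ j ∈ S₂, 1 ≤ j ∧ j ≤ n - 1)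
    (hdisj : Disjoint S₁ S₂)
    (hunion : ∀ j : ℕ, 1 ≤ j → j ≤ n - 1 → j ∈ S₁ ∨ j ∈ S₂)
    (hclosed₁ : ∀ j ∈ S₁, 2 * j % n ∈ S₁) (hclosed₂ : ∀ j ∈ S₂, 2 * j % n ∈ S₂)
    (hμ₁ : S₁.image (fun j => μ * j % n) = S₂)
    (hμ₂ : S₂.image (fun j => μ * j % n) = S₁)
    (d₀ : ℕ)
    (hex₁ : ∃ c ∈ cyclicCode n K β S₁, Odd (wt c) ∧ wt c = d₀)
    (hex₂ : ∃ c ∈ cyclicCode n K β S₂, Odd (wt c) ∧ wt c = d₀)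
    (hmin₁ : ∀ c ∈ cyclicCode n K β S₁, Odd (wt c) → d₀ ≤ wt c)
    (hmin₂ : ∀ c ∈ cyclicCode n K β S₂, Odd (wt c) → d₀ ≤ wt c) :
    n ≤ d₀ ^ 2 :=
  square_root_bound_general n hn K β hβ S₁ S₂ μ hμ hunion hμ₂ d₀ hex₁
end

section
/- Let m ≡ 1 (mod 6) with m ≥ 7 and n = 2^m - 1. The binary cyclic code C of length n whose defining set (with respect to a fixed primitive n-th root of unity) is T = { i : 1 ≤ i ≤ n-1, w₂(i) mod 6 ∈ {0,4,5} } has dimension 2^(m-1), and its minimum distance d satisfies d ≥ 2^((m-1)/2) + 3 if m ≡ 1 (mod 12), and d ≥ 2^((m-1)/2) + 1 if m ≡ 7 (mod 12). -/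
/-- The binary cyclic code of length `n` with defining set `T` (with respect to the
`n`-th root of unity `α`), realized as a subspace of `Fin n → ZMod 2`: the kernel of the
evaluation maps `c ↦ ∑ i, c i • α ^ (i * j)` for `j ∈ T`. -/
noncomputable def cyclicCodeSubmodule (n : ℕ) (K : Type*) [Field K]
    [Algebra (ZMod 2) K] (α : K) (T : Set ℕ) :
    Submodule (ZMod 2) (Fin n → ZMod 2) :=
  ⨅ j ∈ T, LinearMap.ker
    (∑ i : Fin n, α ^ (i.val * j) •
      ((Algebra.linearMap (ZMod 2) K).comp (LinearMap.proj i)))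

/-!
Doubling modulo `n = 2^m - 1` rotates the `m`-bit binary expansion, so `T` is a union of
2-cyclotomic cosets: the generator polynomial `∏_{j ∈ T} (X - α^j)` is fixed by Frobenius,
hence binary, and the code has dimension `n - |T|`. The map `i ↦ n - i` complements the binary
digits, sending `w₂(i)` to `m - w₂(i)`; for `m ≡ 1 (mod 6)` this exchanges `T` with its
complement in `{1, …, n - 1}`, so `|T| = (n - 1) / 2`.

For the distance take `v = 2^s - 1`, coprime to `n` when `gcd(s, m) = 1`. For `1 ≤ a ≤ 2^s`
the product `a v` is `2^s (a - 1)` plus the complement of `a - 1` in `s` bits, so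
`w₂(a v) = s`. This puts a run `v, 2v, …, Lv` inside `T`, and the BCH bound for the primitive
root `α^v` gives `d ≥ L + 1`. For `m = 2s + 1` with `6 ∣ s` the run extends to `a = 2^s + 2`
(weights `2s` and `s`), giving `L = 2^s + 2`; for `m = 2s - 1` with `s ≡ 4 (mod 6)` it is
`L = 2^(s-1)`.
-/

open Finset Polynomial

def binaryWeight (i : ℕ) : ℕ := (Nat.digits 2 i).sum

lemma binaryWeight_of_lt_two {r : ℕ} (hr : r < 2) : binaryWeight r = r := by
  interval_cases r <;> rfl

lemma binaryWeight_add_two_pow_mul {k x : ℕ} (hx : x < 2 ^ k) (y : ℕ) :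
    binaryWeight (x + 2 ^ k * y) = binaryWeight x + binaryWeight y := by
  rcases Nat.eq_zero_or_pos y with rfl | hy
  · simp [binaryWeight]
  have hlen := (Nat.digits_length_le_iff one_lt_two x).mpr hx
  have := Nat.digits_append_zeroes_append_digits (n := x) (k := k - (Nat.digits 2 x).length)
    one_lt_two hy
  rw [Nat.add_sub_cancel' hlen] at this
  simp [binaryWeight, ← this]

lemma binaryWeight_add_two_mul {r : ℕ} (hr : r < 2) (y : ℕ) :
    binaryWeight (r + 2 * y) = r + binaryWeight y := by
  rw [← pow_one 2, binaryWeight_add_two_pow_mul (by omega), binaryWeight_of_lt_two hr]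

lemma binaryWeight_two_pow_sub_one_sub_add {s x : ℕ} (hx : x < 2 ^ s) :
    binaryWeight (2 ^ s - 1 - x) + binaryWeight x = s := by
  induction s generalizing x with
  | zero => interval_cases x; rfl
  | succ s ih =>
    obtain ⟨r, y, hr, rfl⟩ : ∃ r y, r < 2 ∧ x = r + 2 * y :=
      ⟨x % 2, x / 2, by omega, by omega⟩
    rw [pow_succ] at hx
    have hsplit : 2 ^ (s + 1) - 1 - (r + 2 * y) = (1 - r) + 2 * (2 ^ s - 1 - y) := by
      rw [pow_succ]; omega
    rw [hsplit, binaryWeight_add_two_mul (by omega), binaryWeight_add_two_mul hr]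
    have := ih (x := y) (by omega)
    omega

lemma binaryWeight_two_pow_sub_one_sub {s x : ℕ} (hx : x < 2 ^ s) :
    binaryWeight (2 ^ s - 1 - x) = s - binaryWeight x := by
  have := binaryWeight_two_pow_sub_one_sub_add hx
  omega

lemma binaryWeight_mul_two_pow_sub_one {s a : ℕ} (ha : 1 ≤ a) (has : a ≤ 2 ^ s) :
    binaryWeight (a * (2 ^ s - 1)) = s := by
  have hs := Nat.one_le_two_pow (n := s)
  have hsplit : a * (2 ^ s - 1) = (2 ^ s - 1 - (a - 1)) + 2 ^ s * (a - 1) := by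
    zify [ha, hs, show a - 1 ≤ 2 ^ s - 1 by omega]; ring
  rw [hsplit, binaryWeight_add_two_pow_mul (by omega),
    binaryWeight_two_pow_sub_one_sub_add (by omega)]

lemma binaryWeight_two_mul_mod {m j : ℕ} (hj : j < 2 ^ m - 1) :
    binaryWeight (2 * j % (2 ^ m - 1)) = binaryWeight j := by
  rcases Nat.lt_or_ge (2 * j) (2 ^ m - 1) with hlt | hge
  · rw [Nat.mod_eq_of_lt hlt, ← zero_add (2 * j), binaryWeight_add_two_mul two_pos, zero_add]
  obtain _ | k := m
  · simp at hj
  rw [pow_succ] at hj hge ⊢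
  obtain ⟨r, rfl⟩ : ∃ r, j = r + 2 ^ k * 1 := ⟨j - 2 ^ k, by omega⟩
  have hmod : 2 * (r + 2 ^ k * 1) % (2 ^ k * 2 - 1) = 1 + 2 * r := by
    rw [Nat.mod_eq_sub_mod hge, Nat.mod_eq_of_lt (by omega)]; omega
  rw [hmod, binaryWeight_add_two_mul one_lt_two, binaryWeight_add_two_pow_mul (by omega),
    binaryWeight_of_lt_two one_lt_two, add_comm]

lemma binaryWeight_two_pow_add_one_mul (s : ℕ) :
    binaryWeight ((2 ^ s + 1) * (2 ^ s - 1)) = 2 * s := by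
  have h := binaryWeight_two_pow_sub_one_sub_add (s := 2 * s) (x := 0) (Nat.two_pow_pos _)
  rw [Nat.sub_zero, binaryWeight_of_lt_two two_pos, add_zero] at h
  rwa [← Nat.sq_sub_sq, ← pow_mul, one_pow, mul_comm]

lemma binaryWeight_two_pow_add_two_mul {s : ℕ} (hs : 0 < s) :
    binaryWeight ((2 ^ s + 2) * (2 ^ s - 1)) = s := by
  have hX : 2 ≤ 2 ^ s := Nat.le_self_pow hs.ne' 2
  have hsplit : (2 ^ s + 2) * (2 ^ s - 1) = (2 ^ s - 1 - 1) + 2 ^ s * (0 + 2 ^ s * 1) := by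
    zify [hX, show 1 ≤ 2 ^ s - 1 by omega, show 1 ≤ 2 ^ s by omega]; ring
  rw [hsplit, binaryWeight_add_two_pow_mul (by omega),
    binaryWeight_add_two_pow_mul (Nat.two_pow_pos _),
    binaryWeight_two_pow_sub_one_sub (by omega), binaryWeight_of_lt_two one_lt_two,
    binaryWeight_of_lt_two two_pos]
  omega

lemma Nat.Coprime.two_pow_sub_one {s m : ℕ} (h : s.Coprime m) :
    (2 ^ s - 1).Coprime (2 ^ m - 1) := by
  rw [Nat.Coprime, Nat.pow_sub_one_gcd_pow_sub_one, h.gcd_eq_one, pow_one]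

lemma card_filter_Icc_of_sub_iff_not {n : ℕ} {p : ℕ → Prop} [DecidablePred p]
    (hp : ∀ i ∈ Icc 1 (n - 1), p (n - i) ↔ ¬ p i) :
    2 * #((Icc 1 (n - 1)).filter p) = n - 1 := by
  have hswap : #((Icc 1 (n - 1)).filter p) = #{i ∈ Icc 1 (n - 1) | ¬ p i} := by
    apply card_nbij' (n - ·) (n - ·)
    · intro i hi
      simp only [coe_filter, mem_Icc, Set.mem_ofPred_eq] at hi ⊢
      exact ⟨by omega, (hp i (mem_Icc.mpr hi.1)).not.mpr (not_not.mpr hi.2)⟩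
    · intro i hi
      simp only [coe_filter, mem_Icc, Set.mem_ofPred_eq] at hi ⊢
      exact ⟨by omega, (hp i (mem_Icc.mpr hi.1)).mpr hi.2⟩
    all_goals
      intro i hi
      simp only [coe_filter, mem_Icc, Set.mem_ofPred_eq] at hi
      dsimp only
      omega
  have := card_filter_add_card_filter_not (s := Icc 1 (n - 1)) (p := p)
  rw [Nat.card_Icc] at this
  omega

def duadicDefiningSet (m : ℕ) : Finset ℕ :=
  {i ∈ Icc 1 (2 ^ m - 1 - 1) |
    binaryWeight i % 6 = 0 ∨ binaryWeight i % 6 = 4 ∨ binaryWeight i % 6 = 5}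

lemma mem_duadicDefiningSet {m i : ℕ} :
    i ∈ duadicDefiningSet m ↔ 1 ≤ i ∧ i ≤ 2 ^ m - 1 - 1 ∧
      (binaryWeight i % 6 = 0 ∨ binaryWeight i % 6 = 4 ∨ binaryWeight i % 6 = 5) := by
  simp [duadicDefiningSet, and_assoc]

lemma card_duadicDefiningSet {m : ℕ} (hm : m % 6 = 1) :
    #(duadicDefiningSet m) = 2 ^ (m - 1) - 1 := by
  have hpow : 2 ^ m = 2 * 2 ^ (m - 1) := by rw [← pow_succ']; congr 1; omega
  have := card_filter_Icc_of_sub_iff_not (n := 2 ^ m - 1)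
    (p := fun i => binaryWeight i % 6 = 0 ∨ binaryWeight i % 6 = 4 ∨ binaryWeight i % 6 = 5)
    fun i hi => by
      rw [mem_Icc] at hi
      have := binaryWeight_two_pow_sub_one_sub_add (s := m) (x := i) (by omega)
      rw [binaryWeight_two_pow_sub_one_sub (by omega)]
      omega
  unfold duadicDefiningSet
  omega

lemma two_mul_mod_mem_duadicDefiningSet {m j : ℕ} (hj : j ∈ duadicDefiningSet m) :
    2 * j % (2 ^ m - 1) ∈ duadicDefiningSet m := by
  rw [mem_duadicDefiningSet] at hj ⊢
  have hm : m ≠ 0 := by rintro rfl; omega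
  have hodd : Odd (2 ^ m - 1) :=
    Nat.Even.sub_odd Nat.one_le_two_pow ((Nat.even_pow' hm).mpr even_two) odd_one
  have hpos : 2 * j % (2 ^ m - 1) ≠ 0 := fun h0 => by
    have := Nat.Coprime.dvd_of_dvd_mul_left (Nat.coprime_two_right.mpr hodd)
      (Nat.dvd_of_mod_eq_zero h0)
    exact absurd (Nat.eq_zero_of_dvd_of_lt this (by omega)) (by omega)
  have hlt := Nat.mod_lt (2 * j) (show 0 < 2 ^ m - 1 by omega)
  rw [binaryWeight_two_mul_mod (by omega)]
  exact ⟨by omega, by omega, hj.2.2⟩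

lemma mul_two_pow_sub_one_mem_duadicDefiningSet_of_mod_six_eq_zero {s a : ℕ} (hs : s % 6 = 0)
    (hs0 : 0 < s) (ha : a ∈ Icc 1 (2 ^ s + 2)) :
    a * (2 ^ s - 1) ∈ duadicDefiningSet (2 * s + 1) := by
  rw [mem_Icc] at ha
  have hX : 2 ≤ 2 ^ s := Nat.le_self_pow hs0.ne' 2
  have hle : a * (2 ^ s - 1) ≤ (2 ^ s + 2) * (2 ^ s - 1) := Nat.mul_le_mul_right _ ha.2
  have hbound : (2 ^ s + 2) * (2 ^ s - 1) + 2 ≤ 2 ^ (2 * s + 1) := by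
    obtain ⟨Y, hY⟩ : ∃ Y, 2 ^ s = Y + 1 := ⟨2 ^ s - 1, by omega⟩
    rw [pow_succ, pow_mul', hY, Nat.add_sub_cancel]
    nlinarith
  have hweight : binaryWeight (a * (2 ^ s - 1)) % 6 = 0 := by
    rcases (by omega : a ≤ 2 ^ s ∨ a = 2 ^ s + 1 ∨ a = 2 ^ s + 2) with h | rfl | rfl
    · rw [binaryWeight_mul_two_pow_sub_one ha.1 h, hs]
    · rw [binaryWeight_two_pow_add_one_mul]; omega
    · rw [binaryWeight_two_pow_add_two_mul hs0, hs]
  exact mem_duadicDefiningSet.mpr ⟨Nat.mul_pos (by omega) (by omega), by omega, .inl hweight⟩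

lemma mul_two_pow_sub_one_mem_duadicDefiningSet_of_mod_six_eq_four {s a : ℕ} (hs : s % 6 = 4)
    (ha : a ∈ Icc 1 (2 ^ (s - 1))) :
    a * (2 ^ s - 1) ∈ duadicDefiningSet (2 * s - 1) := by
  rw [mem_Icc] at ha
  obtain ⟨Y, hY⟩ : ∃ Y, 2 ^ (s - 1) = Y + 1 :=
    ⟨2 ^ (s - 1) - 1, by have := Nat.two_pow_pos (s - 1); omega⟩
  have hYs : 2 ^ s = 2 * Y + 2 := by rw [← Nat.two_pow_pred_mul_two (by omega), hY]; ring
  have hle : a * (2 ^ s - 1) ≤ 2 ^ (s - 1) * (2 ^ s - 1) := Nat.mul_le_mul_right _ ha.2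
  have hbound : 2 ^ (s - 1) * (2 ^ s - 1) + 2 ≤ 2 ^ (2 * s - 1) := by
    have hY1 : 1 ≤ Y := by have := Nat.le_self_pow (show s - 1 ≠ 0 by omega) 2; omega
    rw [show 2 * s - 1 = s - 1 + s by omega, pow_add, hYs, hY,
      show 2 * Y + 2 - 1 = 2 * Y + 1 by omega]
    nlinarith
  have hweight : binaryWeight (a * (2 ^ s - 1)) % 6 = 4 := by
    rw [binaryWeight_mul_two_pow_sub_one ha.1
      (ha.2.trans (Nat.pow_le_pow_right two_pos (by omega))), hs]
  exact mem_duadicDefiningSet.mpr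
    ⟨Nat.mul_pos (by omega) (by omega), by omega, .inr (.inl hweight)⟩

lemma Polynomial.finrank_ker_modByMonicHom_comp_degreeLT_subtype {R : Type*} [Field R] {g : R[X]}
    (hg : g.Monic) {n : ℕ} (hgn : g.natDegree ≤ n) :
    Module.finrank R (LinearMap.ker ((modByMonicHom g).comp (degreeLT R n).subtype)) =
      n - g.natDegree := by
  set f := (modByMonicHom g).comp (degreeLT R n).subtype
  have hrange : LinearMap.range f = degreeLT R g.natDegree := by
    apply le_antisymm
    · rintro _ ⟨p, rfl⟩
      rw [mem_degreeLT, ← degree_eq_natDegree hg.ne_zero]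
      exact degree_modByMonic_lt _ hg
    · intro p hp
      refine ⟨⟨p, degreeLT_mono hgn hp⟩, (modByMonic_eq_self_iff hg).mpr ?_⟩
      rwa [mem_degreeLT, ← degree_eq_natDegree hg.ne_zero] at hp
  have := f.finrank_range_add_finrank_ker
  rw [hrange, (degreeLTEquiv R _).finrank_eq, (degreeLTEquiv R _).finrank_eq,
    Module.finrank_fin_fun, Module.finrank_fin_fun] at this
  omega

lemma Polynomial.dvd_iff_forall_aeval_eq_zero_of_map_eq_prod {R K : Type*} [CommRing R] [Field K]
    [Algebra R K] (hinj : Function.Injective (algebraMap R K)) {g : R[X]} (hg : g.Monic)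
    {s : Finset K} (hgs : g.map (algebraMap R K) = ∏ x ∈ s, (X - C x)) (p : R[X]) :
    g ∣ p ↔ ∀ x ∈ s, aeval x p = 0 := by
  rw [← map_dvd_map _ hinj hg, hgs]
  constructor
  · intro hdvd x hx
    have := dvd_iff_isRoot.mp ((dvd_prod_of_mem (fun x => X - C x) hx).trans hdvd)
    rwa [IsRoot, eval_map, ← aeval_def] at this
  · intro hroot
    refine prod_dvd_of_coprime ((pairwise_coprime_X_sub_C Function.injective_id).set_pairwise _)
      fun x hx => ?_
    rw [dvd_iff_isRoot, IsRoot, eval_map, ← aeval_def]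
    exact hroot x hx

lemma exists_monic_map_eq_prod_X_sub_C_of_sq_mem {K : Type*} [Field K] [Algebra (ZMod 2) K]
    {s : Finset K} (hs : ∀ x ∈ s, x ^ 2 ∈ s) :
    ∃ g : (ZMod 2)[X], g.Monic ∧ g.map (algebraMap (ZMod 2) K) = ∏ x ∈ s, (X - C x) := by
  classical
  have : CharP K 2 := charP_of_injective_algebraMap (algebraMap (ZMod 2) K).injective 2
  have hsq_inj : Function.Injective fun x : K => x ^ 2 := frobenius_inj K 2
  have himage : s.image (· ^ 2) = s :=
    eq_of_subset_of_card_le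
      (fun _ hy => by obtain ⟨x, hx, rfl⟩ := mem_image.mp hy; exact hs x hx)
      (card_image_of_injective s hsq_inj).ge
  set G := ∏ x ∈ s, (X - C x)
  have hfrob : G.map (frobenius K 2) = G := by
    simp only [G, Polynomial.map_prod, Polynomial.map_sub, map_X, map_C, frobenius_def]
    conv_rhs => rw [← himage, prod_image fun x _ y _ h => hsq_inj h]
  have hcoeff : ∀ k, G.coeff k ∈ Set.range (algebraMap (ZMod 2) K) := by
    intro k
    have hidem : IsIdempotentElem (G.coeff k) := by
      rw [IsIdempotentElem, ← sq, ← frobenius_def, ← coeff_map, hfrob]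
    rcases IsIdempotentElem.iff_eq_zero_or_one.mp hidem with h | h <;> rw [h]
    exacts [⟨0, map_zero _⟩, ⟨1, map_one _⟩]
  obtain ⟨g, hmap, -, hmonic⟩ := lifts_and_degree_eq_and_monic
    ((lifts_iff_coeff_lifts G).mpr hcoeff) (monic_prod_of_monic _ _ fun x _ => monic_X_sub_C x)
  exact ⟨g, hmonic, hmap⟩

lemma Polynomial.aeval_degreeLTEquiv_symm {R A : Type*} [CommSemiring R] [Semiring A] [Algebra R A]
    {n : ℕ} (c : Fin n → R) (x : A) :
    aeval x ((degreeLTEquiv R n).symm c : R[X]) =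
      ∑ i : Fin n, algebraMap R A (c i) * x ^ (i : ℕ) := by
  change aeval x (∑ i : Fin n, monomial i (c i)) = _
  simp [aeval_monomial]

lemma Finset.eq_zero_of_forall_sum_pow_mul_eq_zero {ι R : Type*} [CommRing R] [IsDomain R]
    {s : Finset ι} {f v : ι → R} (hf : Set.InjOn f s)
    (hv : ∀ k < #s, ∑ i ∈ s, f i ^ k * v i = 0) : ∀ i ∈ s, v i = 0 := by
  let e := s.equivFin
  have hfe : Function.Injective fun r => f (e.symm r) := fun r r' h =>
    e.symm.injective (Subtype.ext (hf (e.symm r).2 (e.symm r').2 h))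
  have hzero : (fun r => v (e.symm r)) = 0 := by
    refine Matrix.eq_zero_of_mulVec_eq_zero
      (M := Matrix.transpose (Matrix.vandermonde fun r => f (e.symm r)))
      (by rw [Matrix.det_transpose]; exact Matrix.det_vandermonde_ne_zero_iff.mpr hfe)
      (funext fun k => ?_)
    simp only [Matrix.mulVec, dotProduct, Matrix.transpose_apply, Matrix.vandermonde_apply,
      Pi.zero_apply]
    rw [e.symm.sum_comp (fun i : s => f i ^ (k : ℕ) * v i),
      s.sum_coe_sort fun i => f i ^ (k : ℕ) * v i, hv k k.2]
  intro i hi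
  simpa [e] using congrFun hzero (e ⟨i, hi⟩)

theorem bch_bound {K : Type*} [Field K] {n L : ℕ} {β : K} (hβ : IsPrimitiveRoot β n)
    {c : Fin n → K} (hc : ∀ a ∈ Icc 1 L, ∑ i : Fin n, c i * (β ^ a) ^ (i : ℕ) = 0)
    (hc0 : c ≠ 0) {S : Finset (Fin n)} (hS : ∀ i ∉ S, c i = 0) : L + 1 ≤ #S := by
  by_contra! hlt
  have hzero := eq_zero_of_forall_sum_pow_mul_eq_zero (s := S)
    (f := fun i => β ^ (i : ℕ)) (v := fun i => c i * β ^ (i : ℕ))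
    (fun i _ j _ h => Fin.ext (hβ.pow_inj i.2 j.2 h)) fun k hk => by
      calc ∑ i ∈ S, (β ^ (i : ℕ)) ^ k * (c i * β ^ (i : ℕ))
          = ∑ i, c i * (β ^ (k + 1)) ^ (i : ℕ) := by
            rw [sum_subset (subset_univ S) fun i _ hi => by simp [hS i hi]]
            exact sum_congr rfl fun i _ => by ring
        _ = 0 := hc (k + 1) (mem_Icc.mpr ⟨by omega, by omega⟩)
  obtain ⟨i, hi⟩ := Function.ne_iff.mp hc0
  have hiS : i ∈ S := by by_contra h; exact hi (hS i h)
  exact hi (by simpa [hβ.ne_zero (Fin.pos i).ne'] using hzero i hiS)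

section CyclicCode

variable {K : Type*} [Field K] [Algebra (ZMod 2) K]

lemma mem_cyclicCodeSubmodule_iff {n : ℕ} {α : K} {T : Set ℕ} {c : Fin n → ZMod 2} :
    c ∈ cyclicCodeSubmodule n K α T ↔
      ∀ j ∈ T, ∑ i : Fin n, algebraMap (ZMod 2) K (c i) * (α ^ j) ^ (i : ℕ) = 0 := by
  simp only [cyclicCodeSubmodule, Submodule.mem_iInf, LinearMap.mem_ker, LinearMap.sum_apply,
    LinearMap.smul_apply, LinearMap.comp_apply, LinearMap.proj_apply,
    Algebra.linearMap_apply, smul_eq_mul, ← pow_mul, mul_comm]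

theorem finrank_cyclicCodeSubmodule {n : ℕ} {α : K} (hα : IsPrimitiveRoot α n) (T : Finset ℕ)
    (hTn : ∀ j ∈ T, j < n) (hT : ∀ j ∈ T, 2 * j % n ∈ T) :
    Module.finrank (ZMod 2) (cyclicCodeSubmodule n K α T) = n - #T := by
  classical
  set s := T.image (α ^ ·)
  have hinj : Set.InjOn (α ^ ·) T := fun i hi j hj h => hα.pow_inj (hTn i hi) (hTn j hj) h
  have hs : ∀ x ∈ s, x ^ 2 ∈ s := by
    simp only [s, mem_image, forall_exists_index, and_imp, forall_apply_eq_imp_iff₂]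
    intro j hj
    refine ⟨2 * j % n, hT j hj, ?_⟩
    rw [← pow_mul, mul_comm, hα.eq_orderOf, pow_mod_orderOf]
  obtain ⟨g, hg, hgs⟩ := exists_monic_map_eq_prod_X_sub_C_of_sq_mem hs
  have hdeg : g.natDegree = #T := by
    rw [← natDegree_map_eq_of_injective (algebraMap (ZMod 2) K).injective, hgs,
      natDegree_finsetProd_X_sub_C_eq_card, card_image_of_injOn hinj]
  have hcode : cyclicCodeSubmodule n K α T =
      (LinearMap.ker ((modByMonicHom g).comp (degreeLT (ZMod 2) n).subtype)).map
        (degreeLTEquiv (ZMod 2) n : (ZMod 2)[X]_n →ₗ[ZMod 2] Fin n → ZMod 2) := by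
    ext c
    rw [Submodule.mem_map_equiv, LinearMap.mem_ker, LinearMap.comp_apply, Submodule.subtype_apply,
      modByMonicHom_apply, modByMonic_eq_zero_iff_dvd hg,
      dvd_iff_forall_aeval_eq_zero_of_map_eq_prod (algebraMap (ZMod 2) K).injective hg hgs,
      mem_cyclicCodeSubmodule_iff]
    simp [s, aeval_degreeLTEquiv_symm]
  have hcard : #T ≤ n := by
    simpa using card_le_card (s := T) (t := range n) fun j hj => mem_range.mpr (hTn j hj)
  rw [hcode, LinearEquiv.finrank_map_eq,
    finrank_ker_modByMonicHom_comp_degreeLT_subtype hg (hdeg ▸ hcard), hdeg]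

theorem le_wt_of_mem_cyclicCodeSubmodule {n v L : ℕ} {α : K} {T : Set ℕ}
    (hα : IsPrimitiveRoot α n) (hv : v.Coprime n) (hT : ∀ a ∈ Icc 1 L, a * v ∈ T)
    {c : Fin n → ZMod 2} (hc : c ∈ cyclicCodeSubmodule n K α T) (hc0 : c ≠ 0) :
    L + 1 ≤ wt c :=
  bch_bound (hα.pow_of_coprime v hv) (c := fun i => algebraMap (ZMod 2) K (c i))
    (fun a ha => by rw [← pow_mul, mul_comm]; exact mem_cyclicCodeSubmodule_iff.mp hc _ (hT a ha))
    (fun h => hc0 (funext fun i => (algebraMap (ZMod 2) K).injective (by simpa using congrFun h i)))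
    (fun i hi => by simpa using hi)

end CyclicCode

theorem duadic_code_parameters (m : ℕ) (hm : 7 ≤ m) (h : m % 6 = 1)
    (K : Type*) [Field K] [Algebra (ZMod 2) K] (α : K)
    (hα : IsPrimitiveRoot α (2 ^ m - 1)) :
    let n := 2 ^ m - 1
    let T : Set ℕ := {i | 1 ≤ i ∧ i ≤ n - 1 ∧
      ((Nat.digits 2 i).sum % 6 = 0 ∨ (Nat.digits 2 i).sum % 6 = 4 ∨
        (Nat.digits 2 i).sum % 6 = 5)}
    Module.finrank (ZMod 2) (cyclicCodeSubmodule n K α T) = 2 ^ (m - 1) ∧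
    ∀ c ∈ cyclicCodeSubmodule n K α T, c ≠ 0 →
      (m % 12 = 1 → 2 ^ ((m - 1) / 2) + 3 ≤ wt c) ∧
      (m % 12 = 7 → 2 ^ ((m - 1) / 2) + 1 ≤ wt c) := by
  intro n T
  have hT : T = duadicDefiningSet m := by
    ext i
    simp [T, n, mem_duadicDefiningSet, binaryWeight]
  rw [hT]
  refine ⟨?_, fun c hc hc0 => ⟨fun h12 => ?_, fun h12 => ?_⟩⟩
  · have hpow : 2 ^ m = 2 * 2 ^ (m - 1) := by rw [← pow_succ']; congr 1; omega
    rw [finrank_cyclicCodeSubmodule hα _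
      (fun j hj => by have := mem_duadicDefiningSet.mp hj; omega)
      (fun j hj => two_mul_mod_mem_duadicDefiningSet hj), card_duadicDefiningSet h]
    omega
  · obtain ⟨s, hms, hs⟩ : ∃ s, m = 2 * s + 1 ∧ s % 6 = 0 := ⟨m / 2, by omega, by omega⟩
    have hcop : s.Coprime m := by simp [hms]
    have := le_wt_of_mem_cyclicCodeSubmodule hα (L := 2 ^ s + 2) hcop.two_pow_sub_one
      (fun a ha => hms ▸ mul_two_pow_sub_one_mem_duadicDefiningSet_of_mod_six_eq_zero hs
        (by omega) ha) hc hc0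
    rwa [show (m - 1) / 2 = s by omega]
  · obtain ⟨s, hms, hs⟩ : ∃ s, m = 2 * s - 1 ∧ s % 6 = 4 :=
      ⟨(m + 1) / 2, by omega, by omega⟩
    have hcop : s.Coprime m := by
      rw [hms, show 2 * s - 1 = (s - 1) + s by omega, Nat.coprime_add_self_right,
        Nat.coprime_self_sub_right (by omega)]
      exact Nat.coprime_one_right s
    have := le_wt_of_mem_cyclicCodeSubmodule hα (L := 2 ^ (s - 1)) hcop.two_pow_sub_one
      (fun a ha => hms ▸ mul_two_pow_sub_one_mem_duadicDefiningSet_of_mod_six_eq_four hs ha)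
      hc hc0
    rwa [show (m - 1) / 2 = s - 1 by omega]
end
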